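/- arXiv:2102.12554 — 6 statements merged into one kernel-verified Lean document; each statement's English description precedes it below -/
import Mathlib

section
/- The likelihood ratio is positive and at most one: under the hypothesis W⁺ t x ⊆ W⁰ t x (both nonempty) for all t < T and x, the ratio F_t(x) = exp(V⁺_t(x) − V⁰_t(x)) satisfies 0 < F_t(x) ≤ 1 for all t ≤ T and all states x. -/
/-- The likelihood ratio is positive and at most one: under the
hypothesis `W⁺ t x ⊆ W⁰ t x` (both nonempty) for all `t < T` and `x`, the
ratio `F t x = exp (V⁺ t x - V⁰ t x)` satisfies `0 < F t x ≤ 1` for all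
`t ≤ T` and all states `x`. -/
theorem likelihood_ratio_pos_le_one
    {𝒳 𝒜 : Type*} [Fintype 𝒳] [Fintype 𝒜]
    (T : ℕ) (S : 𝒳 → 𝒜 → 𝒳 → ℝ) (r : 𝒳 → 𝒜 → ℝ) (w : 𝒳 → ℝ)
    (hS0 : ∀ x a x', 0 ≤ S x a x') (hS1 : ∀ x a, ∑ x', S x a x' = 1)
    (W0 Wp : ℕ → 𝒳 → Finset 𝒜)
    (hW0 : ∀ t, t < T → ∀ x, (W0 t x).Nonempty)
    (hWp : ∀ t, t < T → ∀ x, (Wp t x).Nonempty)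
    (hsub : ∀ t, t < T → ∀ x, Wp t x ⊆ W0 t x)
    (V0 Vp : ℕ → 𝒳 → ℝ) (Q0 Qp : ℕ → 𝒳 → 𝒜 → ℝ)
    (hV0T : ∀ x, V0 T x = w x)
    (hQ0 : ∀ t, t < T → ∀ x a, Q0 t x a = r x a + ∑ x', S x a x' * V0 (t + 1) x')
    (hV0 : ∀ t, t < T → ∀ x,
      V0 t x = Real.log (∑ a ∈ W0 t x, Real.exp (Q0 t x a)))
    (hVpT : ∀ x, Vp T x = w x)
    (hQp : ∀ t, t < T → ∀ x a, Qp t x a = r x a + ∑ x', S x a x' * Vp (t + 1) x')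
    (hVp : ∀ t, t < T → ∀ x,
      Vp t x = Real.log (∑ a ∈ Wp t x, Real.exp (Qp t x a)))
    (F : ℕ → 𝒳 → ℝ)
    (hF : ∀ t x, F t x = Real.exp (Vp t x - V0 t x)) :
    ∀ t, t ≤ T → ∀ x, 0 < F t x ∧ F t x ≤ 1 := by
  have key : ∀ n t, t + n = T → ∀ x, Vp t x ≤ V0 t x := by
    intro n
    induction n with
    | zero =>
      intro t ht x
      simp only [Nat.add_zero] at ht
      subst ht
      rw [hV0T, hVpT]
    | succ n ih =>
      intro t ht x
      have htT : t < T := by omega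
      have hQle : ∀ a, Qp t x a ≤ Q0 t x a := by
        intro a
        rw [hQp t htT, hQ0 t htT]
        gcongr with x' _
        · exact hS0 x a x'
        · exact ih (t + 1) (by omega) x'
      rw [hVp t htT, hV0 t htT]
      have hpos : 0 < ∑ a ∈ Wp t x, Real.exp (Qp t x a) :=
        Finset.sum_pos (fun a _ => Real.exp_pos _) (hWp t htT x)
      apply Real.log_le_log hpos
      calc ∑ a ∈ Wp t x, Real.exp (Qp t x a)
          ≤ ∑ a ∈ Wp t x, Real.exp (Q0 t x a) := by
            gcongr with a _
            exact hQle a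
        _ ≤ ∑ a ∈ W0 t x, Real.exp (Q0 t x a) :=
            Finset.sum_le_sum_of_subset_of_nonneg (hsub t htT x)
              (fun a _ _ => (Real.exp_pos _).le)
  intro t ht x
  rw [hF]
  refine ⟨Real.exp_pos _, ?_⟩
  rw [← Real.exp_zero]
  exact Real.exp_le_exp.mpr (by linarith [key (T - t) t (by omega) x])
end

section
/- Theorem 1 (dynamic programming for the likelihood ratio): under the hypothesis W⁺ t x ⊆ W⁰ t x (both nonempty) for all t < T and x, for every t < T and state x, the likelihood ratio satisfies the backward recursion F_t(x) = ∑_{a ∈ W⁺ t x} exp(Q⁰_t(x,a) − V⁰_t(x)) · exp(∑_{x'} S x a x' · log(F_{t+1}(x'))); equivalently, F_t(x) is the expectation, under the baseline maximum-causal-entropy policy P⁰_t(·|x) restricted to actions feasible for W⁺, of exp of the expected log of F_{t+1} over next states. -/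
/-- Theorem 1, dynamic programming for the likelihood ratio:
under the hypothesis `W⁺ t x ⊆ W⁰ t x` (both nonempty) for all `t < T` and
`x`, for every `t < T` and state `x`, the likelihood ratio satisfies the
backward recursion
`F t x = ∑ a ∈ W⁺ t x, exp (Q⁰ t x a - V⁰ t x) * exp (∑ x', S x a x' * log (F (t+1) x'))`,
i.e. `F t x` is the expectation, under the baseline maximum-causal-entropy
policy restricted to actions feasible for `W⁺`, of `exp` of the expected log
of `F (t+1)` over next states. -/
theorem likelihood_ratio_bellman_backup
    {𝒳 𝒜 : Type*} [Fintype 𝒳] [Fintype 𝒜]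
    (T : ℕ) (S : 𝒳 → 𝒜 → 𝒳 → ℝ) (r : 𝒳 → 𝒜 → ℝ) (w : 𝒳 → ℝ)
    (hS0 : ∀ x a x', 0 ≤ S x a x') (hS1 : ∀ x a, ∑ x', S x a x' = 1)
    (W0 Wp : ℕ → 𝒳 → Finset 𝒜)
    (hW0 : ∀ t, t < T → ∀ x, (W0 t x).Nonempty)
    (hWp : ∀ t, t < T → ∀ x, (Wp t x).Nonempty)
    (hsub : ∀ t, t < T → ∀ x, Wp t x ⊆ W0 t x)
    (V0 Vp : ℕ → 𝒳 → ℝ) (Q0 Qp : ℕ → 𝒳 → 𝒜 → ℝ)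
    (hV0T : ∀ x, V0 T x = w x)
    (hQ0 : ∀ t, t < T → ∀ x a, Q0 t x a = r x a + ∑ x', S x a x' * V0 (t + 1) x')
    (hV0 : ∀ t, t < T → ∀ x,
      V0 t x = Real.log (∑ a ∈ W0 t x, Real.exp (Q0 t x a)))
    (hVpT : ∀ x, Vp T x = w x)
    (hQp : ∀ t, t < T → ∀ x a, Qp t x a = r x a + ∑ x', S x a x' * Vp (t + 1) x')
    (hVp : ∀ t, t < T → ∀ x,
      Vp t x = Real.log (∑ a ∈ Wp t x, Real.exp (Qp t x a)))
    (F : ℕ → 𝒳 → ℝ)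
    (hF : ∀ t x, F t x = Real.exp (Vp t x - V0 t x)) :
    ∀ t, t < T → ∀ x,
      F t x = ∑ a ∈ Wp t x, Real.exp (Q0 t x a - V0 t x) *
        Real.exp (∑ x', S x a x' * Real.log (F (t + 1) x')) := by
  intro t ht x
  have hterm : ∀ a ∈ Wp t x,
      Real.exp (Q0 t x a - V0 t x) *
        Real.exp (∑ x', S x a x' * Real.log (F (t + 1) x'))
      = Real.exp (Qp t x a - V0 t x) := by
    intro a _
    rw [← Real.exp_add]
    congr 1
    have hlog : ∀ x', Real.log (F (t + 1) x') = Vp (t + 1) x' - V0 (t + 1) x' := by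
      intro x'; rw [hF, Real.log_exp]
    simp only [hlog]
    rw [hQ0 t ht, hQp t ht]
    simp only [mul_sub]
    rw [Finset.sum_sub_distrib]
    ring
  rw [Finset.sum_congr rfl hterm]
  have hpos : 0 < ∑ a ∈ Wp t x, Real.exp (Qp t x a) :=
    Finset.sum_pos (fun a _ => Real.exp_pos _) (hWp t ht x)
  simp only [Real.exp_sub]
  rw [← Finset.sum_div, hF, hVp t ht, Real.exp_sub, Real.exp_log hpos]
end

section
/- Property 1 (monotonicity of the likelihood ratio in the constraints): let W⁰ be a baseline constraint scheme and let W⁺ and W⁺⁻ be two augmented schemes with W⁺⁻ t x ⊆ W⁺ t x ⊆ W⁰ t x (all nonempty) for all t < T and x. Then the likelihood ratios F⁺⁻_t(x) = exp(V⁺⁻_t(x) − V⁰_t(x)) and F⁺_t(x) = exp(V⁺_t(x) − V⁰_t(x)) satisfy F⁺⁻_t(x) ≤ F⁺_t(x) for all t ≤ T and all states x; in particular F⁺⁻_0(x₀) ≤ F⁺_0(x₀) at any initial state x₀. -/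
/-- Property 1, monotonicity of the likelihood ratio in the
constraints: let `W⁰` be a baseline constraint scheme and let `W⁺` and `W⁺⁻`
be two augmented schemes with `W⁺⁻ t x ⊆ W⁺ t x ⊆ W⁰ t x` (all nonempty) for
all `t < T` and `x`.  Then the likelihood ratios
`F⁺⁻ t x = exp (V⁺⁻ t x - V⁰ t x)` and `F⁺ t x = exp (V⁺ t x - V⁰ t x)`
satisfy `F⁺⁻ t x ≤ F⁺ t x` for all `t ≤ T` and all states `x`; in particular
at any initial state `x₀` we have `F⁺⁻ 0 x₀ ≤ F⁺ 0 x₀`. -/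
theorem likelihood_ratio_monotone_in_constraints
    {𝒳 𝒜 : Type*} [Fintype 𝒳] [Fintype 𝒜]
    (T : ℕ) (S : 𝒳 → 𝒜 → 𝒳 → ℝ) (r : 𝒳 → 𝒜 → ℝ) (w : 𝒳 → ℝ)
    (hS0 : ∀ x a x', 0 ≤ S x a x') (hS1 : ∀ x a, ∑ x', S x a x' = 1)
    (W0 Wp Wpm : ℕ → 𝒳 → Finset 𝒜)
    (hW0 : ∀ t, t < T → ∀ x, (W0 t x).Nonempty)
    (hWp : ∀ t, t < T → ∀ x, (Wp t x).Nonempty)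
    (hWpm : ∀ t, t < T → ∀ x, (Wpm t x).Nonempty)
    (hsub1 : ∀ t, t < T → ∀ x, Wpm t x ⊆ Wp t x)
    (hsub0 : ∀ t, t < T → ∀ x, Wp t x ⊆ W0 t x)
    (V0 Vp Vpm : ℕ → 𝒳 → ℝ) (Q0 Qp Qpm : ℕ → 𝒳 → 𝒜 → ℝ)
    (hV0T : ∀ x, V0 T x = w x)
    (hQ0 : ∀ t, t < T → ∀ x a, Q0 t x a = r x a + ∑ x', S x a x' * V0 (t + 1) x')
    (hV0 : ∀ t, t < T → ∀ x,
      V0 t x = Real.log (∑ a ∈ W0 t x, Real.exp (Q0 t x a)))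
    (hVpT : ∀ x, Vp T x = w x)
    (hQp : ∀ t, t < T → ∀ x a, Qp t x a = r x a + ∑ x', S x a x' * Vp (t + 1) x')
    (hVp : ∀ t, t < T → ∀ x,
      Vp t x = Real.log (∑ a ∈ Wp t x, Real.exp (Qp t x a)))
    (hVpmT : ∀ x, Vpm T x = w x)
    (hQpm : ∀ t, t < T → ∀ x a, Qpm t x a = r x a + ∑ x', S x a x' * Vpm (t + 1) x')
    (hVpm : ∀ t, t < T → ∀ x,
      Vpm t x = Real.log (∑ a ∈ Wpm t x, Real.exp (Qpm t x a)))
    (Fp Fpm : ℕ → 𝒳 → ℝ)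
    (hFp : ∀ t x, Fp t x = Real.exp (Vp t x - V0 t x))
    (hFpm : ∀ t x, Fpm t x = Real.exp (Vpm t x - V0 t x)) :
    (∀ t, t ≤ T → ∀ x, Fpm t x ≤ Fp t x) ∧ ∀ x₀, Fpm 0 x₀ ≤ Fp 0 x₀ := by

  have key : ∀ k t, t + k = T → ∀ x, Vpm t x ≤ Vp t x := by
    intro k
    induction k with
    | zero =>
      intro t ht x
      simp only [Nat.add_zero] at ht
      subst ht
      rw [hVpmT, hVpT]
    | succ n ih =>
      intro t ht x
      have htT : t < T := by omega
      have ih' : ∀ x, Vpm (t+1) x ≤ Vp (t+1) x := ih (t+1) (by omega)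
      have hQ : ∀ a, Qpm t x a ≤ Qp t x a := by
        intro a
        rw [hQpm t htT, hQp t htT]
        gcongr with x' _
        · exact hS0 x a x'
        · exact ih' x'
      rw [hVpm t htT, hVp t htT]
      have hpos : (0:ℝ) < ∑ a ∈ Wpm t x, Real.exp (Qpm t x a) :=
        Finset.sum_pos (fun a _ => Real.exp_pos _) (hWpm t htT x)
      apply Real.log_le_log hpos
      calc ∑ a ∈ Wpm t x, Real.exp (Qpm t x a)
          ≤ ∑ a ∈ Wpm t x, Real.exp (Qp t x a) := by
            gcongr with a _; exact hQ a
        _ ≤ ∑ a ∈ Wp t x, Real.exp (Qp t x a) :=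
            Finset.sum_le_sum_of_subset_of_nonneg (hsub1 t htT x)
              (fun a _ _ => (Real.exp_pos _).le)
  have main : ∀ t, t ≤ T → ∀ x, Fpm t x ≤ Fp t x := by
    intro t ht x
    rw [hFpm, hFp]
    apply Real.exp_le_exp.mpr
    have := key (T - t) t (by omega) x
    linarith
  exact ⟨main, fun x₀ => main 0 (Nat.zero_le _) x₀⟩
end

section
/- Corollary 1 (lower risk tolerance gives smaller likelihood ratio): fix constrained states C_X ⊆ 𝒳, forbidden actions C_A ⊆ 𝒜, and for ψ : 𝒳 → ℝ let W_ψ(x) = { a ∈ 𝒜 : a ∉ C_A and S x a x' ≤ ψ(x') for all x' ∈ C_X } (taken as the feasible set at every time t < T). Let W⁰ be a baseline constraint scheme. If ψ'(x) ≤ ψ(x) for all x, and W_{ψ'}(x) ⊆ W_ψ(x) ⊆ W⁰ t x with W_{ψ'}(x) nonempty for all t < T and x, then the likelihood ratios satisfy exp(V^{ψ'}_t(x) − V⁰_t(x)) ≤ exp(V^{ψ}_t(x) − V⁰_t(x)) for all t ≤ T and all x. -/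
/-- Corollary 1, lower risk tolerance gives smaller likelihood
ratio: fix constrained states `C_X`, forbidden actions `C_A`, and for
`ψ : 𝒳 → ℝ` let `Wψ x = {a | a ∉ C_A ∧ ∀ x' ∈ C_X, S x a x' ≤ ψ x'}`, taken
as the feasible set at every time `t < T`.  Let `W⁰` be a baseline constraint
scheme.  If `ψ' x ≤ ψ x` for all `x`, and `Wψ' x ⊆ Wψ x ⊆ W⁰ t x` with
`Wψ' x` nonempty for all `t < T` and `x`, then the likelihood ratios satisfy
`exp (Vψ' t x - V⁰ t x) ≤ exp (Vψ t x - V⁰ t x)` for all `t ≤ T` and all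
`x`. -/
theorem lower_risk_tolerance_smaller_ratio
    {𝒳 𝒜 : Type*} [Fintype 𝒳] [Fintype 𝒜]
    (T : ℕ) (S : 𝒳 → 𝒜 → 𝒳 → ℝ) (r : 𝒳 → 𝒜 → ℝ) (w : 𝒳 → ℝ)
    (hS0 : ∀ x a x', 0 ≤ S x a x') (hS1 : ∀ x a, ∑ x', S x a x' = 1)
    (CX : Set 𝒳) (CA : Set 𝒜) (ψ ψ' : 𝒳 → ℝ)
    (hψ : ∀ x, ψ' x ≤ ψ x)
    (Wψ Wψ' : 𝒳 → Finset 𝒜)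
    (hWψmem : ∀ x a, a ∈ Wψ x ↔ a ∉ CA ∧ ∀ x' ∈ CX, S x a x' ≤ ψ x')
    (hWψ'mem : ∀ x a, a ∈ Wψ' x ↔ a ∉ CA ∧ ∀ x' ∈ CX, S x a x' ≤ ψ' x')
    (W0 : ℕ → 𝒳 → Finset 𝒜)
    (hW0 : ∀ t, t < T → ∀ x, (W0 t x).Nonempty)
    (hne : ∀ x, (Wψ' x).Nonempty)
    (hsub1 : ∀ x, Wψ' x ⊆ Wψ x)
    (hsub0 : ∀ t, t < T → ∀ x, Wψ x ⊆ W0 t x)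
    (V0 Vψ Vψ' : ℕ → 𝒳 → ℝ) (Q0 Qψ Qψ' : ℕ → 𝒳 → 𝒜 → ℝ)
    (hV0T : ∀ x, V0 T x = w x)
    (hQ0 : ∀ t, t < T → ∀ x a, Q0 t x a = r x a + ∑ x', S x a x' * V0 (t + 1) x')
    (hV0 : ∀ t, t < T → ∀ x,
      V0 t x = Real.log (∑ a ∈ W0 t x, Real.exp (Q0 t x a)))
    (hVψT : ∀ x, Vψ T x = w x)
    (hQψ : ∀ t, t < T → ∀ x a, Qψ t x a = r x a + ∑ x', S x a x' * Vψ (t + 1) x')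
    (hVψ : ∀ t, t < T → ∀ x,
      Vψ t x = Real.log (∑ a ∈ Wψ x, Real.exp (Qψ t x a)))
    (hVψ'T : ∀ x, Vψ' T x = w x)
    (hQψ' : ∀ t, t < T → ∀ x a, Qψ' t x a = r x a + ∑ x', S x a x' * Vψ' (t + 1) x')
    (hVψ' : ∀ t, t < T → ∀ x,
      Vψ' t x = Real.log (∑ a ∈ Wψ' x, Real.exp (Qψ' t x a))) :
    ∀ t, t ≤ T → ∀ x,
      Real.exp (Vψ' t x - V0 t x) ≤ Real.exp (Vψ t x - V0 t x) := by
  have key : ∀ d, d ≤ T → ∀ x, Vψ' (T - d) x ≤ Vψ (T - d) x := by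
    intro d
    induction d with
    | zero => intro _ x; simp [hVψ'T, hVψT]
    | succ d ih =>
      intro hd x
      have hdT : d ≤ T := Nat.le_of_succ_le hd
      have ht : T - (d + 1) < T := Nat.sub_lt (Nat.lt_of_lt_of_le (Nat.succ_pos d) hd) (Nat.succ_pos d)
      have hsucc : T - (d + 1) + 1 = T - d := by omega
      have hQ : ∀ a, Qψ' (T - (d + 1)) x a ≤ Qψ (T - (d + 1)) x a := by
        intro a
        rw [hQψ' _ ht, hQψ _ ht]
        gcongr with x' _
        · exact hS0 x a x'
        · rw [hsucc]; exact ih hdT x'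
      rw [hVψ' _ ht, hVψ _ ht]
      have hpos : 0 < ∑ a ∈ Wψ' x, Real.exp (Qψ' (T - (d + 1)) x a) :=
        Finset.sum_pos (fun a _ => Real.exp_pos _) (hne x)
      have hle : ∑ a ∈ Wψ' x, Real.exp (Qψ' (T - (d + 1)) x a)
          ≤ ∑ a ∈ Wψ x, Real.exp (Qψ (T - (d + 1)) x a) :=
        le_trans (Finset.sum_le_sum fun a _ => Real.exp_le_exp.2 (hQ a))
          (Finset.sum_le_sum_of_subset_of_nonneg (hsub1 x)
            (fun a _ _ => (Real.exp_pos _).le))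
      exact Real.log_le_log hpos hle
  intro t ht x
  have : Vψ' t x ≤ Vψ t x := by
    have := key (T - t) (Nat.sub_le T t) x
    rwa [Nat.sub_sub_self ht] at this
  exact Real.exp_le_exp.2 (by linarith)
end

section
/- One-step likelihood ratio identity: under the hypothesis W⁺ t x ⊆ W⁰ t x (both nonempty) for all t < T and x, for every t < T, state x, and action a ∈ W⁺ t x, the maximum-causal-entropy policies satisfy P⁺_t(a|x) = P⁰_t(a|x) · exp(∑_{x'} S x a x' · log(F_{t+1}(x'))) / F_t(x), where F_s(y) = exp(V⁺_s(y) − V⁰_s(y)). -/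
/-- One-step likelihood ratio identity: under the hypothesis
`W⁺ t x ⊆ W⁰ t x` (both nonempty) for all `t < T` and `x`, for every `t < T`,
state `x`, and action `a ∈ W⁺ t x`, the maximum-causal-entropy policies
satisfy
`P⁺ t x a = P⁰ t x a * exp (∑ x', S x a x' * log (F (t+1) x')) / F t x`,
where `F s y = exp (V⁺ s y - V⁰ s y)`. -/
theorem one_step_likelihood_ratio_identity
    {𝒳 𝒜 : Type*} [Fintype 𝒳] [Fintype 𝒜] [DecidableEq 𝒜]
    (T : ℕ) (S : 𝒳 → 𝒜 → 𝒳 → ℝ) (r : 𝒳 → 𝒜 → ℝ) (w : 𝒳 → ℝ)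
    (hS0 : ∀ x a x', 0 ≤ S x a x') (hS1 : ∀ x a, ∑ x', S x a x' = 1)
    (W0 Wp : ℕ → 𝒳 → Finset 𝒜)
    (hW0 : ∀ t, t < T → ∀ x, (W0 t x).Nonempty)
    (hWp : ∀ t, t < T → ∀ x, (Wp t x).Nonempty)
    (hsub : ∀ t, t < T → ∀ x, Wp t x ⊆ W0 t x)
    (V0 Vp : ℕ → 𝒳 → ℝ) (Q0 Qp : ℕ → 𝒳 → 𝒜 → ℝ)
    (hV0T : ∀ x, V0 T x = w x)
    (hQ0 : ∀ t, t < T → ∀ x a, Q0 t x a = r x a + ∑ x', S x a x' * V0 (t + 1) x')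
    (hV0 : ∀ t, t < T → ∀ x,
      V0 t x = Real.log (∑ a ∈ W0 t x, Real.exp (Q0 t x a)))
    (hVpT : ∀ x, Vp T x = w x)
    (hQp : ∀ t, t < T → ∀ x a, Qp t x a = r x a + ∑ x', S x a x' * Vp (t + 1) x')
    (hVp : ∀ t, t < T → ∀ x,
      Vp t x = Real.log (∑ a ∈ Wp t x, Real.exp (Qp t x a)))
    (P0 Pp : ℕ → 𝒳 → 𝒜 → ℝ)
    (hP0 : ∀ t x a,
      P0 t x a = if a ∈ W0 t x then Real.exp (Q0 t x a - V0 t x) else 0)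
    (hPp : ∀ t x a,
      Pp t x a = if a ∈ Wp t x then Real.exp (Qp t x a - Vp t x) else 0)
    (F : ℕ → 𝒳 → ℝ)
    (hF : ∀ s y, F s y = Real.exp (Vp s y - V0 s y)) :
    ∀ t, t < T → ∀ x, ∀ a ∈ Wp t x,
      Pp t x a = P0 t x a *
        Real.exp (∑ x', S x a x' * Real.log (F (t + 1) x')) / F t x := by
  intro t ht x a ha
  have ha0 : a ∈ W0 t x := hsub t ht x ha
  rw [hPp, hP0, if_pos ha, if_pos ha0, hF]
  have hlog : ∀ x', Real.log (F (t + 1) x') = Vp (t + 1) x' - V0 (t + 1) x' := by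
    intro x'; rw [hF, Real.log_exp]
  simp only [hlog, mul_sub]
  rw [Finset.sum_sub_distrib, ← Real.exp_add, ← Real.exp_sub]
  congr 1
  rw [hQp t ht, hQ0 t ht]
  ring
end

section
/- Correctness of the ratio recursion in Algorithm 1: under the hypothesis W⁺ t x ⊆ W⁰ t x (both nonempty) for all t < T and x, define Z⁰ by Z⁰_T(x) = exp(w(x)) and Z⁰_t(x) = ∑_{a ∈ W⁰ t x} exp( r(x,a) + ∑_{x'} S x a x' · log(Z⁰_{t+1}(x')) ), and define G by G_T(x) = 1 and G_t(x) = (1 / Z⁰_t(x)) · ∑_{a ∈ W⁺ t x} exp( r(x,a) + ∑_{x'} S x a x' · (log Z⁰_{t+1}(x') + log G_{t+1}(x')) ). Then G_t(x) = exp(V⁺_t(x) − V⁰_t(x)) for all t ≤ T and all states x, where V⁰ and V⁺ are the soft values of W⁰ and W⁺ respectively. -/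
/-- Correctness of the ratio recursion in Algorithm 1: under
the hypothesis `W⁺ t x ⊆ W⁰ t x` (both nonempty) for all `t < T` and `x`,
define `Z⁰` by `Z⁰ T x = exp (w x)` and
`Z⁰ t x = ∑ a ∈ W⁰ t x, exp (r x a + ∑ x', S x a x' * log (Z⁰ (t+1) x'))`,
and define `G` by `G T x = 1` and
`G t x = (1 / Z⁰ t x) * ∑ a ∈ W⁺ t x,
  exp (r x a + ∑ x', S x a x' * (log (Z⁰ (t+1) x') + log (G (t+1) x')))`.
Then `G t x = exp (V⁺ t x - V⁰ t x)` for all `t ≤ T` and all states `x`,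
where `V⁰` and `V⁺` are the soft values of `W⁰` and `W⁺` respectively. -/
theorem ratio_recursion_correct
    {𝒳 𝒜 : Type*} [Fintype 𝒳] [Fintype 𝒜]
    (T : ℕ) (S : 𝒳 → 𝒜 → 𝒳 → ℝ) (r : 𝒳 → 𝒜 → ℝ) (w : 𝒳 → ℝ)
    (hS0 : ∀ x a x', 0 ≤ S x a x') (hS1 : ∀ x a, ∑ x', S x a x' = 1)
    (W0 Wp : ℕ → 𝒳 → Finset 𝒜)
    (hW0 : ∀ t, t < T → ∀ x, (W0 t x).Nonempty)
    (hWp : ∀ t, t < T → ∀ x, (Wp t x).Nonempty)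
    (hsub : ∀ t, t < T → ∀ x, Wp t x ⊆ W0 t x)
    (V0 Vp : ℕ → 𝒳 → ℝ) (Q0 Qp : ℕ → 𝒳 → 𝒜 → ℝ)
    (hV0T : ∀ x, V0 T x = w x)
    (hQ0 : ∀ t, t < T → ∀ x a, Q0 t x a = r x a + ∑ x', S x a x' * V0 (t + 1) x')
    (hV0 : ∀ t, t < T → ∀ x,
      V0 t x = Real.log (∑ a ∈ W0 t x, Real.exp (Q0 t x a)))
    (hVpT : ∀ x, Vp T x = w x)
    (hQp : ∀ t, t < T → ∀ x a, Qp t x a = r x a + ∑ x', S x a x' * Vp (t + 1) x')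
    (hVp : ∀ t, t < T → ∀ x,
      Vp t x = Real.log (∑ a ∈ Wp t x, Real.exp (Qp t x a)))
    (Z0 G : ℕ → 𝒳 → ℝ)
    (hZ0T : ∀ x, Z0 T x = Real.exp (w x))
    (hZ0 : ∀ t, t < T → ∀ x,
      Z0 t x = ∑ a ∈ W0 t x,
        Real.exp (r x a + ∑ x', S x a x' * Real.log (Z0 (t + 1) x')))
    (hGT : ∀ x, G T x = 1)
    (hG : ∀ t, t < T → ∀ x,
      G t x = (1 / Z0 t x) * ∑ a ∈ Wp t x,
        Real.exp (r x a + ∑ x', S x a x' *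
          (Real.log (Z0 (t + 1) x') + Real.log (G (t + 1) x')))) :
    ∀ t, t ≤ T → ∀ x, G t x = Real.exp (Vp t x - V0 t x) := by
  have key : ∀ d t, t + d = T →
      (∀ x, Z0 t x = Real.exp (V0 t x)) ∧
      (∀ x, G t x = Real.exp (Vp t x - V0 t x)) := by
    intro d
    induction d with
    | zero =>
      intro t ht
      simp only [Nat.add_zero] at ht
      subst ht
      exact ⟨fun x => by rw [hZ0T, hV0T],
        fun x => by rw [hGT, hVpT, hV0T, sub_self, Real.exp_zero]⟩
    | succ d ih =>
      intro t ht
      have htT : t < T := by omega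
      have ih' := ih (t + 1) (by omega)
      have hlogZ : ∀ x', Real.log (Z0 (t + 1) x') = V0 (t + 1) x' := by
        intro x'; rw [ih'.1, Real.log_exp]
      have hlogG : ∀ x', Real.log (G (t + 1) x') = Vp (t + 1) x' - V0 (t + 1) x' := by
        intro x'; rw [ih'.2, Real.log_exp]
      have hZ : ∀ x, Z0 t x = Real.exp (V0 t x) := by
        intro x
        have hsum : Z0 t x = ∑ a ∈ W0 t x, Real.exp (Q0 t x a) := by
          rw [hZ0 t htT x]
          refine Finset.sum_congr rfl fun a _ => ?_
          rw [hQ0 t htT x a]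
          simp only [hlogZ]
        have hpos : 0 < ∑ a ∈ W0 t x, Real.exp (Q0 t x a) :=
          Finset.sum_pos (fun a _ => Real.exp_pos _) (hW0 t htT x)
        rw [hsum, hV0 t htT x, Real.exp_log hpos]
      refine ⟨hZ, fun x => ?_⟩
      have hsum : (∑ a ∈ Wp t x,
          Real.exp (r x a + ∑ x', S x a x' *
            (Real.log (Z0 (t + 1) x') + Real.log (G (t + 1) x'))))
          = ∑ a ∈ Wp t x, Real.exp (Qp t x a) := by
        refine Finset.sum_congr rfl fun a _ => ?_
        rw [hQp t htT x a]
        simp only [hlogZ, hlogG]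
        congr 1
        refine congrArg _ (Finset.sum_congr rfl fun x' _ => ?_)
        ring
      have hpos : 0 < ∑ a ∈ Wp t x, Real.exp (Qp t x a) :=
        Finset.sum_pos (fun a _ => Real.exp_pos _) (hWp t htT x)
      rw [hG t htT x, hsum, hZ x, hVp t htT x, Real.exp_sub,
        Real.exp_log hpos]
      ring
  intro t ht x
  exact (key (T - t) t (by omega)).2 x
end
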